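/- Let f be monotone submodular with f(∅)=0, c a positive modular cost, OPT ⊆ V, o* ∈ OPT of maximum cost, S ⊆ V with c(S) ≤ c(OPT) − c(o*), and v ∈ OPT \ (S ∪ {o*}) maximizing f(e|S)/c(e). If moreover f(S ∪ {o*}) < f(OPT)/2 and f(S) ≥ (c(S)/(2(c(OPT) − c(o*)))) · f(OPT), then f(S ∪ {v}) ≥ (c(S ∪ {v})/(2(c(OPT) − c(o*)))) · f(OPT). -/

import Mathlib

/-!
Let `T = S ∪ {o*}` and `ρ = f(v|S) / c(v)`. By submodularity, `f(OPT) ≤ f(T) + Σ_{e ∈ OPT \ T} f(e|S)`,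
and greedy maximality of `v` bounds each term by `ρ c(e)`; since `c(OPT \ T) ≤ c(OPT) - c(o*)`,
the hypothesis `f(T) < f(OPT)/2` forces `f(v|S) ≥ c(v) f(OPT) / (2 (c(OPT) - c(o*)))`.
Adding this to the induction hypothesis on `f(S)` gives the claim.
-/

open Finset

section

variable {α : Type*} [DecidableEq α]

def IsSubmodular (f : Finset α → ℝ) : Prop :=
  ∀ S T : Finset α, S ⊆ T → ∀ x ∉ T, f (insert x T) - f T ≤ f (insert x S) - f S

theorem IsSubmodular.apply_union_le_add_sum {f : Finset α → ℝ} (hmono : Monotone f)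
    (hsub : IsSubmodular f) {S T : Finset α} (hST : S ⊆ T) (A : Finset α) :
    f (A ∪ T) ≤ f T + ∑ e ∈ A, (f (insert e S) - f S) := by
  induction A using Finset.induction_on with
  | empty => simp
  | @insert a A ha ih =>
    have hgain : f (insert a (A ∪ T)) - f (A ∪ T) ≤ f (insert a S) - f S := by
      by_cases haT : a ∈ A ∪ T
      · rw [insert_eq_of_mem haT, sub_self, sub_nonneg]
        exact hmono (subset_insert a S)
      · exact hsub S (A ∪ T) (hST.trans subset_union_right) a haT
    rw [insert_union, sum_insert ha]
    linarith

theorem IsSubmodular.le_add_sum_sdiff {f : Finset α → ℝ} (hmono : Monotone f)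
    (hsub : IsSubmodular f) {S T : Finset α} (hST : S ⊆ T) (U : Finset α) :
    f U ≤ f T + ∑ e ∈ U \ T, (f (insert e S) - f S) :=
  calc f U ≤ f (U \ T ∪ T) := hmono (by simp [subset_union_left])
    _ ≤ _ := hsub.apply_union_le_add_sum hmono hST _

theorem sum_le_mul_sum_of_div_le {ι : Type*} {A : Finset ι} {g c : ι → ℝ} {ρ : ℝ}
    (hc : ∀ e ∈ A, 0 < c e) (h : ∀ e ∈ A, g e / c e ≤ ρ) :
    ∑ e ∈ A, g e ≤ ρ * ∑ e ∈ A, c e := by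
  rw [mul_sum]
  exact sum_le_sum fun e he => (div_le_iff₀ (hc e he)).mp (h e he)

theorem sum_sdiff_insert_le_sum_sub {c : α → ℝ} (hc : ∀ x, 0 ≤ c x) {U S : Finset α} {o : α}
    (ho : o ∈ U) : ∑ x ∈ U \ insert o S, c x ≤ (∑ x ∈ U, c x) - c o := by
  rw [← sum_erase_eq_sub ho]
  refine sum_le_sum_of_subset_of_nonneg (fun x hx => ?_) fun x _ _ => hc x
  simp only [mem_sdiff, mem_insert, not_or] at hx
  exact mem_erase.mpr ⟨hx.2.1, hx.1⟩

end

theorem evoSMC_inductive_step_general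
    {α : Type*} [DecidableEq α]
    (f : Finset α → ℝ) (c : α → ℝ)
    (hmono : ∀ S T : Finset α, S ⊆ T → f S ≤ f T)
    (hsub : ∀ S T : Finset α, S ⊆ T → ∀ x ∉ T,
      f (insert x T) - f T ≤ f (insert x S) - f S)
    (hc : ∀ x, 0 < c x)
    (OPT : Finset α)
    (ostar : α) (hostar : ostar ∈ OPT)
    (S : Finset α)
    (v : α) (hv : v ∈ OPT \ insert ostar S)
    (hvmax : ∀ e ∈ OPT \ insert ostar S,
      (f (insert e S) - f S) / c e ≤ (f (insert v S) - f S) / c v)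
    (hhalf : f (insert ostar S) < f OPT / 2)
    (hIH : f S ≥ (∑ x ∈ S, c x) / (2 * ((∑ x ∈ OPT, c x) - c ostar)) * f OPT) :
    f (insert v S) ≥
      (∑ x ∈ insert v S, c x) / (2 * ((∑ x ∈ OPT, c x) - c ostar)) * f OPT := by
  set B := (∑ x ∈ OPT, c x) - c ostar
  set ρ := (f (insert v S) - f S) / c v
  have hvS : v ∉ S := fun h => (mem_sdiff.mp hv).2 (mem_insert_of_mem h)
  have hρ : 0 ≤ ρ := div_nonneg (sub_nonneg.mpr (hmono _ _ (subset_insert v S))) (hc v).le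
  have hcost : ∑ e ∈ OPT \ insert ostar S, c e ≤ B :=
    sum_sdiff_insert_le_sum_sub (fun x => (hc x).le) hostar
  have hB : 0 < B := (hc v).trans_le ((single_le_sum (fun x _ => (hc x).le) hv).trans hcost)
  have hgreedy : f OPT ≤ f (insert ostar S) + ρ * B :=
    calc f OPT ≤ f (insert ostar S) + ∑ e ∈ OPT \ insert ostar S, (f (insert e S) - f S) :=
          IsSubmodular.le_add_sum_sdiff hmono hsub (subset_insert _ _) OPT
      _ ≤ f (insert ostar S) + ρ * ∑ e ∈ OPT \ insert ostar S, c e := by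
          gcongr; exact sum_le_mul_sum_of_div_le (fun e _ => hc e) hvmax
      _ ≤ f (insert ostar S) + ρ * B := by gcongr
  have hgain : c v / (2 * B) * f OPT ≤ f (insert v S) - f S := by
    rw [div_mul_eq_mul_div, div_le_iff₀ (by positivity), ← div_mul_cancel₀ (f (insert v S) - f S) (hc v).ne']
    nlinarith [hc v]
  rw [sum_insert hvS, add_div, add_mul]
  linarith

/-- inductive step inequality (Case I-2.2 of Lemma 3). -/
theorem evoSMC_inductive_step
    {α : Type*} [Fintype α] [DecidableEq α]
    (f : Finset α → ℝ) (c : α → ℝ)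
    (hmono : ∀ S T : Finset α, S ⊆ T → f S ≤ f T)
    (hsub : ∀ S T : Finset α, S ⊆ T → ∀ x ∉ T,
      f (insert x T) - f T ≤ f (insert x S) - f S)
    (hf0 : f ∅ = 0)
    (hfnn : ∀ S : Finset α, 0 ≤ f S)
    (hc : ∀ x, 0 < c x)
    (OPT : Finset α) (hOPTne : OPT.Nonempty)
    (ostar : α) (hostar : ostar ∈ OPT)
    (hmaxcost : ∀ e ∈ OPT, c e ≤ c ostar)
    (S : Finset α)
    (hcS : ∑ x ∈ S, c x ≤ (∑ x ∈ OPT, c x) - c ostar)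
    (v : α) (hv : v ∈ OPT \ insert ostar S)
    (hvmax : ∀ e ∈ OPT \ insert ostar S,
      (f (insert e S) - f S) / c e ≤ (f (insert v S) - f S) / c v)
    (hhalf : f (insert ostar S) < f OPT / 2)
    (hIH : f S ≥ (∑ x ∈ S, c x) / (2 * ((∑ x ∈ OPT, c x) - c ostar)) * f OPT) :
    f (insert v S) ≥
      (∑ x ∈ insert v S, c x) / (2 * ((∑ x ∈ OPT, c x) - c ostar)) * f OPT :=
  evoSMC_inductive_step_general f c hmono hsub hc OPT ostar hostar S v hv hvmax hhalf hIH
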